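/- arXiv:2108.03461 — 3 statements merged into one kernel-verified Lean document; each statement's English description precedes it below -/
import Mathlib

section
/- Consider the event-triggered closed loop with q > λ/(2ε). Then for all t ∈ [0, F), where F is the supremum of the event times, it holds that d(t)² ≤ −γ m(t) and m(t) < 0. -/
open Real Set Filter MeasureTheory intervalIntegral

noncomputable section

/-- The entire function `G(s) = ∑ sⁿ/(n!·(n+1)!)`. -/
def Gfun (s : ℝ) : ℝ := ∑' n : ℕ, s ^ n / ((n.factorial : ℝ) * ((n + 1).factorial : ℝ))

/-- Backstepping control kernel `K`. -/
def Kker (ε lam x y : ℝ) : ℝ := -(lam / (2 * ε)) * y * Gfun (lam * (x ^ 2 - y ^ 2) / (4 * ε))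

/-- Inverse control kernel `L`. -/
def Lker (ε lam x y : ℝ) : ℝ := -(lam / (2 * ε)) * y * Gfun (-(lam * (x ^ 2 - y ^ 2)) / (4 * ε))

/-- Observer kernel `P`. -/
def Pker (ε lam x y : ℝ) : ℝ := -(lam / (2 * ε)) * x * Gfun (lam * (y ^ 2 - x ^ 2) / (4 * ε))

/-- Inverse observer kernel `Q`. -/
def Qker (ε lam x y : ℝ) : ℝ := -(lam / (2 * ε)) * x * Gfun (-(lam * (y ^ 2 - x ^ 2)) / (4 * ε))

/-- Observer gain `p₁(x) = -εq·P(x,1) - ε·P_y(x,1)`. -/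
def p1fun (ε lam q x : ℝ) : ℝ :=
  -(ε * q) * Pker ε lam x 1 - ε * deriv (fun y => Pker ε lam x y) 1

/-- Control gain `k(y) = r·K(1,y) + K_x(1,y)` with `r = q - λ/(2ε)`. -/
def kfun (ε lam q y : ℝ) : ℝ :=
  (q - lam / (2 * ε)) * Kker ε lam 1 y + deriv (fun x => Kker ε lam x y) 1

/-- `g(x) = p₁(x) - ∫₀ˣ K(x,y)p₁(y) dy`. -/
def gfun (ε lam q x : ℝ) : ℝ :=
  p1fun ε lam q x - ∫ y in (0:ℝ)..x, Kker ε lam x y * p1fun ε lam q y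

/-- The `L²(0,1)` norm. -/
def L2norm (f : ℝ → ℝ) : ℝ := Real.sqrt (∫ x in (0:ℝ)..1, f x ^ 2)


/-- The sampled-data (or event-triggered) closed-loop system: the plant `u` and the
observer `û` satisfy, between consecutive update times `t_j`, the reaction-diffusion
PDEs with Robin boundary actuation driven by the held input
`U_j = ∫₀¹ k(y)û(y,t_j)dy`; both are continuous in `t` into `L²(0,1)` and classical
(C¹ in `(x,t)`, C² in `x`) away from the update times. -/
def ClosedLoopSol (ε lam q : ℝ) (tseq : ℕ → ℝ) (u uh : ℝ → ℝ → ℝ) : Prop :=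
  -- continuity of `t ↦ u[t]` and `t ↦ û[t]` into `L²(0,1)`
  (∀ t₀ ≥ (0:ℝ), Tendsto (fun τ => ∫ x in (0:ℝ)..1, (u x τ - u x t₀) ^ 2)
      (nhdsWithin t₀ (Set.Ici 0)) (nhds 0)) ∧
  (∀ t₀ ≥ (0:ℝ), Tendsto (fun τ => ∫ x in (0:ℝ)..1, (uh x τ - uh x t₀) ^ 2)
      (nhdsWithin t₀ (Set.Ici 0)) (nhds 0)) ∧
  -- C¹ regularity in `(x,t)` away from the update times
  ContDiffOn ℝ 1 (fun p : ℝ × ℝ => u p.1 p.2)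
    (Set.Icc 0 1 ×ˢ {t : ℝ | 0 < t ∧ ∀ j, t ≠ tseq j}) ∧
  ContDiffOn ℝ 1 (fun p : ℝ × ℝ => uh p.1 p.2)
    (Set.Icc 0 1 ×ˢ {t : ℝ | 0 < t ∧ ∀ j, t ≠ tseq j}) ∧
  -- C² regularity in `x`
  (∀ t > (0:ℝ), ContDiffOn ℝ 2 (fun x => u x t) (Set.Icc 0 1)) ∧
  (∀ t > (0:ℝ), ContDiffOn ℝ 2 (fun x => uh x t) (Set.Icc 0 1)) ∧
  -- the plant PDE `u_t = ε u_xx + λ u`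
  (∀ t : ℝ, 0 < t → (∀ j, t ≠ tseq j) → ∀ x ∈ Set.Ioo (0:ℝ) 1,
    deriv (fun τ => u x τ) t
      = ε * deriv (deriv (fun ξ => u ξ t)) x + lam * u x t) ∧
  -- the observer PDE `û_t = ε û_xx + λ û + p₁(x)(u(1,t) - û(1,t))`
  (∀ t : ℝ, 0 < t → (∀ j, t ≠ tseq j) → ∀ x ∈ Set.Ioo (0:ℝ) 1,
    deriv (fun τ => uh x τ) t
      = ε * deriv (deriv (fun ξ => uh ξ t)) x + lam * uh x t
        + p1fun ε lam q x * (u 1 t - uh 1 t)) ∧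
  -- boundary conditions on each `(t_j, t_{j+1}]`
  (∀ j : ℕ, ∀ t ∈ Set.Ioc (tseq j) (tseq (j + 1)),
    u 0 t = 0 ∧ uh 0 t = 0 ∧
    deriv (fun ξ => u ξ t) 1 + q * u 1 t
      = (∫ y in (0:ℝ)..1, kfun ε lam q y * uh y (tseq j)) ∧
    deriv (fun ξ => uh ξ t) 1 + q * uh 1 t
      = (∫ y in (0:ℝ)..1, kfun ε lam q y * uh y (tseq j))
        + lam / (2 * ε) * (u 1 t - uh 1 t))

/-- The event-triggered closed loop: the sampled-data closed loop together with the
input holding error `d`, the backstepping target states `ŵ`, `w̃`, the dynamic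
variable `m` solving `ṁ = -ηm + ρd² - β₁‖ŵ[t]‖² - β₂ŵ(1,t)² - β₃w̃(1,t)²` with
`m(0) < 0`, and the event times generated by the dynamic triggering rule
`t_{j+1} = inf{t > t_j : d(t)² > -γ m(t)}`. -/
def EventTriggeredLoop (ε lam q η γ ρ β₁ β₂ β₃ : ℝ) (tseq : ℕ → ℝ)
    (u uh : ℝ → ℝ → ℝ) (d m : ℝ → ℝ) (wh wt : ℝ → ℝ → ℝ) : Prop :=
  ClosedLoopSol ε lam q tseq u uh ∧
  -- the input holding error
  (∀ j : ℕ, ∀ t ∈ Set.Ico (tseq j) (tseq (j + 1)),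
    d t = ∫ y in (0:ℝ)..1, kfun ε lam q y * (uh y (tseq j) - uh y t)) ∧
  -- the backstepping target states
  (∀ x t : ℝ, wh x t = uh x t - ∫ y in (0:ℝ)..x, Kker ε lam x y * uh y t) ∧
  (∀ x t : ℝ, wt x t
    = (u x t - uh x t) + ∫ y in x..(1:ℝ), Qker ε lam x y * (u y t - uh y t)) ∧
  -- the dynamic variable of the event trigger
  Continuous m ∧ m 0 < 0 ∧
  (∀ j : ℕ, ∀ t ∈ Set.Ioo (tseq j) (tseq (j + 1)),
    HasDerivAt m (-η * m t + ρ * d t ^ 2 - β₁ * L2norm (fun x => wh x t) ^ 2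
      - β₂ * wh 1 t ^ 2 - β₃ * wt 1 t ^ 2) t) ∧
  -- the event-triggering rule
  tseq 0 = 0 ∧ StrictMono tseq ∧
  (∀ j : ℕ, {t : ℝ | tseq j < t ∧ d t ^ 2 > -γ * m t}.Nonempty ∧
    tseq (j + 1) = sInf {t : ℝ | tseq j < t ∧ d t ^ 2 > -γ * m t})

/-- `L̃ = 1 + (∫₀¹∫₀ˣ L(x,y)² dy dx)^{1/2}`. -/
def Ltilde (ε lam : ℝ) : ℝ :=
  1 + Real.sqrt (∫ x in (0:ℝ)..1, ∫ y in (0:ℝ)..x, Lker ε lam x y ^ 2)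

/-- `α₁ = 3L̃²∫₀¹(εk''(y) + εk(1)k(y) + λk(y))² dy + 6(εqk(1) + εk'(1))²∫₀¹L(1,y)²dy`. -/
def alpha1 (ε lam q : ℝ) : ℝ :=
  3 * Ltilde ε lam ^ 2 *
      (∫ y in (0:ℝ)..1,
        (ε * deriv (deriv (fun z => kfun ε lam q z)) y
          + ε * kfun ε lam q 1 * kfun ε lam q y + lam * kfun ε lam q y) ^ 2)
    + 6 * (ε * q * kfun ε lam q 1 + ε * deriv (fun z => kfun ε lam q z) 1) ^ 2
        * ∫ y in (0:ℝ)..1, Lker ε lam 1 y ^ 2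

/-- `α₂ = 6(εqk(1) + εk'(1))²`. -/
def alpha2 (ε lam q : ℝ) : ℝ :=
  6 * (ε * q * kfun ε lam q 1 + ε * deriv (fun z => kfun ε lam q z) 1) ^ 2

/-- `α₃ = 6(λk(1)/2 + ∫₀¹ k(y)p₁(y)dy)²`. -/
def alpha3 (ε lam q : ℝ) : ℝ :=
  6 * (lam * kfun ε lam q 1 / 2
    + ∫ y in (0:ℝ)..1, kfun ε lam q y * p1fun ε lam q y) ^ 2

/-!
Since `t_{j+1}` is the infimum of the times after `t_j` at which `d² > -γ m`, the inequality
`d² ≤ -γ m` holds on `(t_j, t_{j+1})`, and there `ρ d² ≤ -ργ m` turns the equation for `m` into the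
differential inequality `ṁ ≤ -(η + ργ) m`. Hence `m · e^{(η+ργ)t}` is nonincreasing on
`[t_j, t_{j+1}]` and `m` stays negative there; by induction `m < 0` at every event time and thus on `[0, F)`. At an event
time itself `d(t_j) = 0` and the trigger condition holds trivially.
-/

theorem exists_mem_Ico_of_le_of_lt {α : Type*} [LinearOrder α] {s : ℕ → α} {t : α}
    (h₀ : s 0 ≤ t) : ∀ {n : ℕ}, t < s n → ∃ j, t ∈ Ico (s j) (s (j + 1))
  | 0, hn => absurd h₀ (not_le.mpr hn)
  | n + 1, hn => by
    rcases lt_or_ge t (s n) with hlt | hge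
    · exact exists_mem_Ico_of_le_of_lt h₀ hlt
    · exact ⟨n, hge, hn⟩

theorem not_of_mem_Ioo_of_eq_csInf {α : Type*} [ConditionallyCompleteLinearOrder α]
    {a b t : α} {P : α → Prop}
    (hb : b = sInf {s | a < s ∧ P s}) (ht : t ∈ Ioo a b) : ¬ P t := by
  subst hb
  exact fun hP => notMem_of_lt_csInf ht.2 ⟨a, fun _ hs => hs.1.le⟩ ⟨ht.1, hP⟩

theorem antitoneOn_mul_exp_of_hasDerivAt_le {f f' : ℝ → ℝ} {a b c : ℝ}
    (hf : ContinuousOn f (Icc a b)) (hderiv : ∀ s ∈ Ioo a b, HasDerivAt f (f' s) s)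
    (hle : ∀ s ∈ Ioo a b, f' s ≤ -c * f s) :
    AntitoneOn (fun s => f s * exp (c * s)) (Icc a b) := by
  have hexp : ∀ s, HasDerivAt (fun s => exp (c * s)) (exp (c * s) * c) s := fun s => by
    simpa using ((hasDerivAt_id s).const_mul c).exp
  refine antitoneOn_of_hasDerivWithinAt_nonpos (convex_Icc a b)
    (f' := fun s => f' s * exp (c * s) + f s * (exp (c * s) * c))
    (hf.mul (continuous_exp.comp (continuous_const.mul continuous_id)).continuousOn)
    (fun s hs => ?_) (fun s hs => ?_) <;> rw [interior_Icc] at hs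
  · exact ((hderiv s hs).mul (hexp s)).hasDerivWithinAt
  have := mul_le_mul_of_nonneg_right (hle s hs) (exp_pos (c * s)).le
  nlinarith

theorem neg_of_hasDerivAt_le_neg_mul {f f' : ℝ → ℝ} {a b c : ℝ}
    (hf : ContinuousOn f (Icc a b)) (hderiv : ∀ s ∈ Ioo a b, HasDerivAt f (f' s) s)
    (hle : ∀ s ∈ Ioo a b, f' s ≤ -c * f s) (ha : f a < 0) {t : ℝ} (ht : t ∈ Icc a b) :
    f t < 0 := by
  have hmono := antitoneOn_mul_exp_of_hasDerivAt_le hf hderiv hle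
    ⟨le_rfl, ht.1.trans ht.2⟩ ht ht.1
  have : f t * exp (c * t) < 0 := hmono.trans_lt (mul_neg_of_neg_of_pos ha (exp_pos _))
  exact neg_of_mul_neg_left this (exp_pos _).le

theorem trigger_rhs_le {η γ ρ β₁ β₂ β₃ m d a b c : ℝ} (hρ : 0 ≤ ρ)
    (hβ₁ : 0 ≤ β₁) (hβ₂ : 0 ≤ β₂) (hβ₃ : 0 ≤ β₃) (hd : d ^ 2 ≤ -γ * m) :
    -η * m + ρ * d ^ 2 - β₁ * a ^ 2 - β₂ * b ^ 2 - β₃ * c ^ 2 ≤ -(η + ρ * γ) * m := by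
  nlinarith [mul_le_mul_of_nonneg_left hd hρ, mul_nonneg hβ₁ (sq_nonneg a),
    mul_nonneg hβ₂ (sq_nonneg b), mul_nonneg hβ₃ (sq_nonneg c)]

theorem event_trigger_invariant_general
    (ε lam q η γ ρ β₁ β₂ β₃ : ℝ)
    (hγ : 0 < γ) (hρ : 0 < ρ)
    (hβ₁ : 0 < β₁) (hβ₂ : 0 < β₂) (hβ₃ : 0 < β₃)
    (tseq : ℕ → ℝ) (u uh : ℝ → ℝ → ℝ) (d m : ℝ → ℝ) (wh wt : ℝ → ℝ → ℝ)
    (hloop : EventTriggeredLoop ε lam q η γ ρ β₁ β₂ β₃ tseq u uh d m wh wt) :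
    ∀ t : ℝ, 0 ≤ t → (∃ j : ℕ, t < tseq j) →
      d t ^ 2 ≤ -γ * m t ∧ m t < 0 := by
  obtain ⟨-, hd, -, -, hmcont, hm0, hmode, htseq0, hmono, htrig⟩ := hloop
  have htrig_Ioo : ∀ j, ∀ t ∈ Ioo (tseq j) (tseq (j + 1)), d t ^ 2 ≤ -γ * m t := fun j t ht =>
    not_lt.mp <| not_of_mem_Ioo_of_eq_csInf (P := fun s => d s ^ 2 > -γ * m s) (htrig j).2 ht
  have hneg_Icc : ∀ j, m (tseq j) < 0 → ∀ t ∈ Icc (tseq j) (tseq (j + 1)), m t < 0 :=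
    fun j hmj t ht => neg_of_hasDerivAt_le_neg_mul hmcont.continuousOn (hmode j)
      (fun s hs => trigger_rhs_le hρ.le hβ₁.le hβ₂.le hβ₃.le (htrig_Ioo j s hs)) hmj ht
  have hneg_event : ∀ j, m (tseq j) < 0 := by
    intro j
    induction j with
    | zero => rwa [htseq0]
    | succ j ih => exact hneg_Icc j ih _ ⟨(hmono j.lt_succ_self).le, le_rfl⟩
  intro t ht₀ ⟨n, hn⟩
  obtain ⟨j, hj⟩ := exists_mem_Ico_of_le_of_lt (htseq0 ▸ ht₀) hn
  have hmt : m t < 0 := hneg_Icc j (hneg_event j) t (Ico_subset_Icc_self hj)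
  refine ⟨?_, hmt⟩
  rcases hj.1.eq_or_lt with heq | hlt
  · have hd0 : d t = 0 := by rw [hd j t hj, ← heq]; simp
    nlinarith
  · exact htrig_Ioo j t ⟨hlt, hj.2⟩

/-- Lemma 1, ETC: along the event-triggered closed loop, for every
`t ∈ [0, F)` — where `F` is the supremum of the event times, i.e. `t < F` iff
`t < t_j` for some `j` — the triggering condition is never violated:
`d(t)² ≤ -γ m(t)` and `m(t) < 0`. -/
theorem event_trigger_invariant
    (ε lam q η γ ρ β₁ β₂ β₃ : ℝ)
    (hε : 0 < ε) (hlam : 0 < lam) (hq : lam / (2 * ε) < q)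
    (hη : 0 < η) (hγ : 0 < γ) (hρ : 0 < ρ)
    (hβ₁ : 0 < β₁) (hβ₂ : 0 < β₂) (hβ₃ : 0 < β₃)
    (tseq : ℕ → ℝ) (u uh : ℝ → ℝ → ℝ) (d m : ℝ → ℝ) (wh wt : ℝ → ℝ → ℝ)
    (hloop : EventTriggeredLoop ε lam q η γ ρ β₁ β₂ β₃ tseq u uh d m wh wt) :
    ∀ t : ℝ, 0 ≤ t → (∃ j : ℕ, t < tseq j) →
      d t ^ 2 ≤ -γ * m t ∧ m t < 0 :=
  event_trigger_invariant_general ε lam q η γ ρ β₁ β₂ β₃ hγ hρ hβ₁ hβ₂ hβ₃ tseq u uh d m wh wt hloop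

end
end

section
/- Let ε, λ > 0 and define K(x,y) = −(λ/(2ε))·y·G(λ(x²−y²)/(4ε)). Then K is smooth on ℝ², and: (i) for all (x,y) ∈ ℝ², ε·(∂²K/∂x²)(x,y) − ε·(∂²K/∂y²)(x,y) = λ·K(x,y); (ii) K(x,0) = 0 for all x; (iii) K(x,x) = −λx/(2ε) for all x. That is, K is the backstepping control kernel solving the kernel PDE ε(K_xx − K_yy) = λK on the triangle 0 ≤ y ≤ x ≤ 1 with boundary conditions K(x,0) = 0 and K(x,x) = −λx/(2ε). -/
open Real Set Filter MeasureTheory intervalIntegral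

noncomputable section

def Sser (k : ℕ) (s : ℝ) : ℝ := ∑' n : ℕ, s ^ n / ((n.factorial : ℝ) * ((n + k).factorial : ℝ))

lemma summable_S (k : ℕ) (s : ℝ) :
    Summable (fun n : ℕ => s ^ n / ((n.factorial : ℝ) * ((n + k).factorial : ℝ))) := by
  apply Summable.of_norm
  apply Summable.of_nonneg_of_le (fun n => norm_nonneg _) _ (Real.summable_pow_div_factorial |s|)
  intro n
  have h1 : (0:ℝ) < n.factorial := by exact_mod_cast n.factorial_pos
  have h2 : (1:ℝ) ≤ (n + k).factorial := by exact_mod_cast (n+k).factorial_pos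
  have h3 : ‖s ^ n / ((n.factorial : ℝ) * ((n + k).factorial : ℝ))‖
      = |s| ^ n / ((n.factorial : ℝ) * ((n + k).factorial : ℝ)) := by
    rw [norm_div, norm_pow, Real.norm_eq_abs, Real.norm_eq_abs,
      abs_of_pos (by nlinarith : (0:ℝ) < (n.factorial : ℝ) * ((n + k).factorial : ℝ))]
  rw [h3]
  apply div_le_div_of_nonneg_left (by positivity) h1
  nlinarith

lemma bound_aux (k : ℕ) (R : ℝ) (hR : 1 ≤ R) {y : ℝ} (hy : |y| ≤ R) (n : ℕ) :
    ‖(n : ℝ) * y ^ (n - 1) / ((n.factorial : ℝ) * ((n + k).factorial : ℝ))‖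
      ≤ (2*R)^n / n.factorial := by
  have hf1 : (0:ℝ) < n.factorial := by exact_mod_cast n.factorial_pos
  have hf2 : (1:ℝ) ≤ (n + k).factorial := by exact_mod_cast (n+k).factorial_pos
  have hR0 : (0:ℝ) ≤ R := le_trans zero_le_one hR
  have hnum : (n:ℝ) * |y| ^ (n-1) ≤ (2*R)^n := by
    have h1 : (n:ℝ) ≤ 2^n := by exact_mod_cast (Nat.lt_two_pow_self (n := n)).le
    have h2 : |y| ^ (n-1) ≤ R ^ n :=
      le_trans (pow_le_pow_left₀ (abs_nonneg y) hy _) (pow_le_pow_right₀ hR (Nat.sub_le n 1))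
    calc (n:ℝ) * |y|^(n-1) ≤ 2^n * R^n :=
          mul_le_mul h1 h2 (by positivity) (by positivity)
      _ = (2*R)^n := (mul_pow 2 R n).symm
  have h3 : ‖(n : ℝ) * y ^ (n - 1) / ((n.factorial : ℝ) * ((n + k).factorial : ℝ))‖
      = (n:ℝ) * |y| ^ (n-1) / ((n.factorial : ℝ) * ((n + k).factorial : ℝ)) := by
    rw [norm_div, norm_mul, norm_pow, Real.norm_eq_abs, Real.norm_eq_abs, Real.norm_eq_abs,
      Nat.abs_cast, abs_of_pos (by nlinarith : (0:ℝ) < (n.factorial : ℝ) * ((n + k).factorial : ℝ))]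
  rw [h3]
  calc (n:ℝ) * |y|^(n-1) / ((n.factorial : ℝ) * ((n + k).factorial : ℝ))
      ≤ (2*R)^n / ((n.factorial : ℝ) * ((n + k).factorial : ℝ)) := by
        gcongr
    _ ≤ (2*R)^n / (n.factorial : ℝ) := by
        apply div_le_div_of_nonneg_left (by positivity) hf1
        nlinarith


lemma hasDerivAt_S (k : ℕ) (s : ℝ) : HasDerivAt (Sser k) (Sser (k+1) s) s := by
  set R : ℝ := |s| + 1 with hRdef
  have hR1 : 1 ≤ R := le_add_of_nonneg_left (abs_nonneg s)
  have hsR : s ∈ Metric.ball (0:ℝ) R := by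
    simp only [Metric.mem_ball, Real.dist_eq, sub_zero]
    linarith [abs_nonneg s]
  have hmem : ∀ y : ℝ, y ∈ Metric.ball (0:ℝ) R → |y| ≤ R := by
    intro y hy
    simp only [Metric.mem_ball, Real.dist_eq, sub_zero] at hy
    exact hy.le
  have hder : HasDerivAt (fun z : ℝ => ∑' n : ℕ, z ^ n / ((n.factorial : ℝ) * ((n + k).factorial : ℝ)))
      (∑' n : ℕ, (n : ℝ) * s ^ (n - 1) / ((n.factorial : ℝ) * ((n + k).factorial : ℝ))) s := by
    apply hasDerivAt_tsum_of_isPreconnected (Real.summable_pow_div_factorial (2*R))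
      Metric.isOpen_ball (convex_ball (0:ℝ) R).isPreconnected
      (fun n y _ => (hasDerivAt_pow n y).div_const _)
      (fun n y hy => bound_aux k R hR1 (hmem y hy) n) hsR (summable_S k s) hsR
  have hsum : Summable (fun n : ℕ => (n : ℝ) * s ^ (n - 1) / ((n.factorial : ℝ) * ((n + k).factorial : ℝ))) :=
    Summable.of_norm_bounded (Real.summable_pow_div_factorial (2*R))
      (fun n => bound_aux k R hR1 (hmem s hsR) n)
  have hval : (∑' n : ℕ, (n : ℝ) * s ^ (n - 1) / ((n.factorial : ℝ) * ((n + k).factorial : ℝ)))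
      = Sser (k+1) s := by
    rw [Summable.tsum_eq_zero_add hsum]
    simp only [Nat.cast_zero, zero_mul, zero_div, zero_add]
    unfold Sser
    apply tsum_congr
    intro n
    have e1 : ((n+1).factorial : ℝ) = (n+1) * n.factorial := by exact_mod_cast Nat.factorial_succ n
    have e2 : n + 1 + k = n + (k + 1) := by omega
    have p1 : (n.factorial : ℝ) ≠ 0 := by
      have : (0:ℝ) < n.factorial := by exact_mod_cast n.factorial_pos
      linarith
    have p2 : ((n + (k+1)).factorial : ℝ) ≠ 0 := by
      have : (0:ℝ) < (n + (k+1)).factorial := by exact_mod_cast (n + (k+1)).factorial_pos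
      linarith
    simp only [Nat.add_sub_cancel, e2, e1]
    push_cast
    field_simp
  rw [← hval]
  exact hder

set_option maxHeartbeats 1000000 in
lemma S_identity (s : ℝ) : s * Sser 3 s + 2 * Sser 2 s = Sser 1 s := by
  have h3 := summable_S 3 s
  have h2 := summable_S 2 s
  have h1 := summable_S 1 s
  have hs3 : Summable (fun n : ℕ => s ^ (n+1) / ((n.factorial : ℝ) * ((n + 3).factorial : ℝ))) :=
    (h3.mul_left s).congr (fun n => by rw [pow_succ]; ring)
  have hs2 : Summable (fun n : ℕ => 2 * (s ^ (n+1) / (((n+1).factorial : ℝ) * ((n + 1 + 2).factorial : ℝ)))) :=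
    (summable_nat_add_iff 1).mpr (h2.mul_left 2)
  have hA : s * Sser 3 s = ∑' n : ℕ, s ^ (n+1) / ((n.factorial : ℝ) * ((n + 3).factorial : ℝ)) := by
    unfold Sser
    rw [← tsum_mul_left]
    exact tsum_congr fun n => by rw [pow_succ]; ring
  have hB : 2 * Sser 2 s = 2 * (s ^ 0 / ((Nat.factorial 0 : ℝ) * ((0 + 2).factorial : ℝ)))
      + ∑' n : ℕ, 2 * (s ^ (n+1) / (((n+1).factorial : ℝ) * ((n + 1 + 2).factorial : ℝ))) := by
    unfold Sser
    rw [← tsum_mul_left, Summable.tsum_eq_zero_add (h2.mul_left 2)]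
  have hC : Sser 1 s = s ^ 0 / ((Nat.factorial 0 : ℝ) * ((0 + 1).factorial : ℝ))
      + ∑' n : ℕ, s ^ (n+1) / (((n+1).factorial : ℝ) * ((n + 1 + 1).factorial : ℝ)) := by
    unfold Sser
    rw [Summable.tsum_eq_zero_add h1]
  have hterm : ∀ n : ℕ, (s ^ (n+1) / ((n.factorial : ℝ) * ((n + 3).factorial : ℝ)))
      + 2 * (s ^ (n+1) / (((n+1).factorial : ℝ) * ((n + 1 + 2).factorial : ℝ)))
      = s ^ (n+1) / (((n+1).factorial : ℝ) * ((n + 1 + 1).factorial : ℝ)) := by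
    intro n
    have e1 : ((n+1).factorial : ℝ) = (n+1) * n.factorial := by exact_mod_cast Nat.factorial_succ n
    have e2 : ((n+3).factorial : ℝ) = (n+3) * (n+2).factorial := by
      exact_mod_cast Nat.factorial_succ (n+2)
    have e3 : n + 1 + 2 = n + 3 := by omega
    have e4 : n + 1 + 1 = n + 2 := by omega
    have p1 : (n.factorial : ℝ) ≠ 0 := by
      have : (0:ℝ) < n.factorial := by exact_mod_cast n.factorial_pos
      linarith
    have p2 : ((n+2).factorial : ℝ) ≠ 0 := by
      have : (0:ℝ) < (n+2).factorial := by exact_mod_cast (n+2).factorial_pos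
      linarith
    rw [e3, e4, e1, e2]
    push_cast
    field_simp
    ring
  have hadd : (∑' n : ℕ, s ^ (n+1) / ((n.factorial : ℝ) * ((n + 3).factorial : ℝ)))
      + (∑' n : ℕ, 2 * (s ^ (n+1) / (((n+1).factorial : ℝ) * ((n + 1 + 2).factorial : ℝ))))
      = ∑' n : ℕ, s ^ (n+1) / (((n+1).factorial : ℝ) * ((n + 1 + 1).factorial : ℝ)) := by
    rw [← Summable.tsum_add hs3 hs2]
    exact tsum_congr hterm
  have hc : 2 * ((s:ℝ) ^ 0 / ((Nat.factorial 0 : ℝ) * ((0 + 2).factorial : ℝ)))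
      = s ^ 0 / ((Nat.factorial 0 : ℝ) * ((0 + 1).factorial : ℝ)) := by
    norm_num [Nat.factorial]
  rw [hA, hB, hC]
  linarith [hadd, hc]


lemma Gfun_eq_S : Gfun = Sser 1 := rfl

lemma Gfun_contDiff : ContDiff ℝ (⊤ : ℕ∞) Gfun := by
  set c : ℕ → ℝ := fun n => 1 / ((n.factorial : ℝ) * ((n + 1).factorial : ℝ)) with hc
  have hrad : (FormalMultilinearSeries.ofScalars ℝ c).radius = ⊤ := by
    apply FormalMultilinearSeries.radius_eq_top_of_summable_norm
    intro r
    apply Summable.of_nonneg_of_le (fun n => by positivity) _ (Real.summable_pow_div_factorial r)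
    intro n
    rw [FormalMultilinearSeries.ofScalars_norm]
    have h1 : (0:ℝ) < n.factorial := by exact_mod_cast n.factorial_pos
    have h2 : (1:ℝ) ≤ (n+1).factorial := by exact_mod_cast (n+1).factorial_pos
    have h3 : ‖c n‖ ≤ 1 / (n.factorial : ℝ) := by
      rw [hc, Real.norm_eq_abs, abs_of_pos (by positivity)]
      apply div_le_div_of_nonneg_left zero_le_one h1
      nlinarith
    calc ‖c n‖ * (r:ℝ)^n ≤ (1/(n.factorial:ℝ)) * (r:ℝ)^n :=
          mul_le_mul_of_nonneg_right h3 (by positivity)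
      _ = (r:ℝ)^n / n.factorial := by ring
  have hball := (FormalMultilinearSeries.ofScalars ℝ c).hasFPowerSeriesOnBall
    (by rw [hrad]; exact ENNReal.zero_lt_top)
  have heq : Gfun = (FormalMultilinearSeries.ofScalars ℝ c).sum := by
    funext s
    unfold Gfun FormalMultilinearSeries.sum
    apply tsum_congr
    intro n
    rw [FormalMultilinearSeries.ofScalars_apply_eq, hc, smul_eq_mul]
    ring
  rw [heq]
  apply AnalyticOnNhd.contDiff
  intro x _
  exact hball.analyticOnNhd x (by rw [hrad]; exact edist_lt_top x 0)


/-- the backstepping kernel `K(x,y) = -(λ/(2ε))·y·G(λ(x²-y²)/(4ε))`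
is smooth and solves the kernel PDE `ε(K_xx - K_yy) = λK` with `K(x,0) = 0`
and `K(x,x) = -λx/(2ε)`. -/
theorem backstepping_kernel_pde (ε lam : ℝ) (hε : 0 < ε) (hlam : 0 < lam) :
    ContDiff ℝ (⊤ : ℕ∞) (fun p : ℝ × ℝ => Kker ε lam p.1 p.2) ∧
    (∀ x y : ℝ,
      ε * deriv (deriv (fun ξ => Kker ε lam ξ y)) x
        - ε * deriv (deriv (fun η => Kker ε lam x η)) y = lam * Kker ε lam x y) ∧
    (∀ x : ℝ, Kker ε lam x 0 = 0) ∧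
    (∀ x : ℝ, Kker ε lam x x = -(lam * x) / (2 * ε)) := by
  have hε' : ε ≠ 0 := ne_of_gt hε
  have hG0 : Gfun 0 = 1 := by
    unfold Gfun
    rw [tsum_eq_single 0 (fun n hn => by simp [zero_pow hn])]
    norm_num [Nat.factorial]
  refine ⟨?_, ?_, ?_, ?_⟩
  · -- smoothness
    unfold Kker
    apply ContDiff.mul
    · exact contDiff_const.mul contDiff_snd
    · apply Gfun_contDiff.comp
      exact (contDiff_const.mul ((contDiff_fst.pow 2).sub (contDiff_snd.pow 2))).div_const (4*ε)
  · -- PDE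
    intro x y
    -- inner functions and derivatives
    have hin_x : ∀ ξ : ℝ, HasDerivAt (fun ξ : ℝ => lam * (ξ ^ 2 - y ^ 2) / (4 * ε))
        (lam * (2 * ξ) / (4 * ε)) ξ := by
      intro ξ
      have h0 : HasDerivAt (fun ξ : ℝ => ξ ^ 2) (2 * ξ) ξ := by
        simpa using hasDerivAt_pow 2 ξ
      exact ((h0.sub_const (y ^ 2)).const_mul lam).div_const (4 * ε)
    have hin_y : ∀ η : ℝ, HasDerivAt (fun η : ℝ => lam * (x ^ 2 - η ^ 2) / (4 * ε))
        (lam * (-(2 * η)) / (4 * ε)) η := by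
      intro η
      have h0 : HasDerivAt (fun η : ℝ => x ^ 2 - η ^ 2) (-(2 * η)) η := by
        simpa using (hasDerivAt_pow 2 η).const_sub (x ^ 2)
      exact (h0.const_mul lam).div_const (4 * ε)
    -- first derivative in x
    have hKx : deriv (fun ξ => Kker ε lam ξ y)
        = fun ξ : ℝ => -(lam / (2 * ε)) * y *
            (Sser 2 (lam * (ξ ^ 2 - y ^ 2) / (4 * ε)) * (lam * (2 * ξ) / (4 * ε))) := by
      funext ξ
      have h : HasDerivAt (fun ξ : ℝ => Kker ε lam ξ y)
          (-(lam / (2 * ε)) * y *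
            (Sser 2 (lam * (ξ ^ 2 - y ^ 2) / (4 * ε)) * (lam * (2 * ξ) / (4 * ε)))) ξ := by
        have hcomp := (hasDerivAt_S 1 (lam * (ξ ^ 2 - y ^ 2) / (4 * ε))).comp ξ (hin_x ξ)
        have := hcomp.const_mul (-(lam / (2 * ε)) * y)
        simpa [Kker, Gfun_eq_S, Function.comp, mul_assoc] using this
      exact h.deriv
    -- second derivative in x
    have hKxx : HasDerivAt (fun ξ : ℝ => -(lam / (2 * ε)) * y *
          (Sser 2 (lam * (ξ ^ 2 - y ^ 2) / (4 * ε)) * (lam * (2 * ξ) / (4 * ε))))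
        (-(lam / (2 * ε)) * y *
          ((Sser 3 (lam * (x ^ 2 - y ^ 2) / (4 * ε)) * (lam * (2 * x) / (4 * ε)))
              * (lam * (2 * x) / (4 * ε))
            + Sser 2 (lam * (x ^ 2 - y ^ 2) / (4 * ε)) * (lam * (2 * 1) / (4 * ε)))) x := by
      have hS2 : HasDerivAt (fun ξ : ℝ => Sser 2 (lam * (ξ ^ 2 - y ^ 2) / (4 * ε)))
          (Sser 3 (lam * (x ^ 2 - y ^ 2) / (4 * ε)) * (lam * (2 * x) / (4 * ε))) x :=
        (hasDerivAt_S 2 _).comp x (hin_x x)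
      have hlin : HasDerivAt (fun ξ : ℝ => lam * (2 * ξ) / (4 * ε)) (lam * (2 * 1) / (4 * ε)) x :=
        (((hasDerivAt_id x).const_mul (2:ℝ)).const_mul lam).div_const (4 * ε)
      exact (hS2.mul hlin).const_mul _
    -- first derivative in y
    have hKy : deriv (fun η => Kker ε lam x η)
        = fun η : ℝ => -(lam / (2 * ε)) * 1 * Sser 1 (lam * (x ^ 2 - η ^ 2) / (4 * ε))
            + -(lam / (2 * ε)) * η *
              (Sser 2 (lam * (x ^ 2 - η ^ 2) / (4 * ε)) * (lam * (-(2 * η)) / (4 * ε))) := by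
      funext η
      have hf : HasDerivAt (fun η : ℝ => -(lam / (2 * ε)) * η) (-(lam / (2 * ε)) * 1) η :=
        (hasDerivAt_id η).const_mul _
      have hg : HasDerivAt (fun η : ℝ => Sser 1 (lam * (x ^ 2 - η ^ 2) / (4 * ε)))
          (Sser 2 (lam * (x ^ 2 - η ^ 2) / (4 * ε)) * (lam * (-(2 * η)) / (4 * ε))) η :=
        (hasDerivAt_S 1 _).comp η (hin_y η)
      have h := hf.mul hg
      have h2 : HasDerivAt (fun η : ℝ => Kker ε lam x η)
          (-(lam / (2 * ε)) * 1 * Sser 1 (lam * (x ^ 2 - η ^ 2) / (4 * ε))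
            + -(lam / (2 * ε)) * η *
              (Sser 2 (lam * (x ^ 2 - η ^ 2) / (4 * ε)) * (lam * (-(2 * η)) / (4 * ε)))) η := by
        simpa [Kker, Gfun_eq_S, Pi.mul_def] using h
      exact h2.deriv
    -- second derivative in y
    have hKyy : HasDerivAt (fun η : ℝ =>
          -(lam / (2 * ε)) * 1 * Sser 1 (lam * (x ^ 2 - η ^ 2) / (4 * ε))
            + -(lam / (2 * ε)) * η *
              (Sser 2 (lam * (x ^ 2 - η ^ 2) / (4 * ε)) * (lam * (-(2 * η)) / (4 * ε))))
        (-(lam / (2 * ε)) * 1 *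
            (Sser 2 (lam * (x ^ 2 - y ^ 2) / (4 * ε)) * (lam * (-(2 * y)) / (4 * ε)))
          + (-(lam / (2 * ε)) * 1 *
              (Sser 2 (lam * (x ^ 2 - y ^ 2) / (4 * ε)) * (lam * (-(2 * y)) / (4 * ε)))
            + -(lam / (2 * ε)) * y *
              ((Sser 3 (lam * (x ^ 2 - y ^ 2) / (4 * ε)) * (lam * (-(2 * y)) / (4 * ε)))
                  * (lam * (-(2 * y)) / (4 * ε))
                + Sser 2 (lam * (x ^ 2 - y ^ 2) / (4 * ε)) * (lam * (-(2 * 1)) / (4 * ε))))) y := by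
      have ht1 : HasDerivAt (fun η : ℝ =>
            -(lam / (2 * ε)) * 1 * Sser 1 (lam * (x ^ 2 - η ^ 2) / (4 * ε)))
          (-(lam / (2 * ε)) * 1 *
            (Sser 2 (lam * (x ^ 2 - y ^ 2) / (4 * ε)) * (lam * (-(2 * y)) / (4 * ε)))) y :=
        ((hasDerivAt_S 1 _).comp y (hin_y y)).const_mul _
      have hA : HasDerivAt (fun η : ℝ => -(lam / (2 * ε)) * η) (-(lam / (2 * ε)) * 1) y :=
        (hasDerivAt_id y).const_mul _
      have hB1 : HasDerivAt (fun η : ℝ => Sser 2 (lam * (x ^ 2 - η ^ 2) / (4 * ε)))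
          (Sser 3 (lam * (x ^ 2 - y ^ 2) / (4 * ε)) * (lam * (-(2 * y)) / (4 * ε))) y :=
        (hasDerivAt_S 2 _).comp y (hin_y y)
      have hB2 : HasDerivAt (fun η : ℝ => lam * (-(2 * η)) / (4 * ε))
          (lam * (-(2 * 1)) / (4 * ε)) y :=
        ((((hasDerivAt_id y).const_mul (2:ℝ)).neg).const_mul lam).div_const (4 * ε)
      exact ht1.add (hA.mul (hB1.mul hB2))
    rw [hKx, hKxx.deriv, hKy, hKyy.deriv]
    have key := S_identity (lam * (x ^ 2 - y ^ 2) / (4 * ε))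
    rw [Kker, Gfun_eq_S, ← key]
    field_simp
    ring
  · intro x; simp [Kker]
  · intro x
    have : lam * (x ^ 2 - x ^ 2) / (4 * ε) = 0 := by ring
    rw [Kker, this, hG0]
    field_simp
end
end

section
/- Let ε, λ > 0 and define K(x,y) = −(λ/(2ε))·y·G(λ(x²−y²)/(4ε)) and L(x,y) = −(λ/(2ε))·y·G(−λ(x²−y²)/(4ε)). For a continuous function f : [0,1] → ℝ define (Tf)(x) = f(x) − ∫₀ˣ K(x,y)f(y)dy and (Sf)(x) = f(x) + ∫₀ˣ L(x,y)f(y)dy. Then for every continuous f : [0,1] → ℝ, S(Tf) = f and T(Sf) = f; that is, the backstepping transformation T is invertible on C⁰([0,1]) and its inverse is the transformation S with kernel L. -/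
open Real Set Filter MeasureTheory intervalIntegral

noncomputable section

/-!
Put `c = λ/(4ε)`, `k_c(x,y) = 2cy·G(c(x² - y²))` and `V_k f(x) = ∫₀ˣ k(x,y) f(y) dy`; then
`T = 1 + V_{k_c}` and `S = 1 + V_{k_{-c}}`. By Fubini on the triangle `0 ≤ y ≤ s ≤ x`,
`V_a ∘ V_b = V_{a∘b}` with `(a∘b)(x,y) = ∫_y^x a(x,s) b(s,y) ds`, so `(1 + V_a)(1 + V_b) = 1` as
soon as `a∘b + a + b = 0`. For `a = k_{-c}`, `b = k_c` (and, replacing `c` by `-c`, in the other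
order) the substitution `w = c(s² - y²)` turns this kernel identity into the convolution formula
`∫₀ᵛ G(w) G(w - v) dw = G(v) - G(-v)`. The latter is checked on the power series: by the beta
integral, the coefficient of `v^(N+1)` reduces to the alternating binomial sum
`∑_{k+l=N} (-1)^l C(N+2, l+1) = 1 + (-1)^N`.
-/

def Gterm (n : ℕ) (s : ℝ) : ℝ := s ^ n / ((n.factorial : ℝ) * ((n + 1).factorial : ℝ))

lemma norm_Gterm_le {s R : ℝ} (hs : ‖s‖ ≤ R) (n : ℕ) : ‖Gterm n s‖ ≤ R ^ n / n.factorial := by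
  simp only [Gterm, norm_div, norm_pow, norm_mul, Real.norm_natCast]
  refine div_le_div₀ (pow_nonneg ((norm_nonneg s).trans hs) n) (by gcongr) (by positivity) ?_
  exact le_mul_of_one_le_right (by positivity) (Nat.one_le_cast.2 (n + 1).factorial_pos)

lemma summable_norm_Gterm (s : ℝ) : Summable fun n => ‖Gterm n s‖ :=
  (Real.summable_pow_div_factorial ‖s‖).of_norm_bounded fun n => by
    simpa using norm_Gterm_le le_rfl n

lemma hasSum_Gterm (s : ℝ) : HasSum (fun n => Gterm n s) (Gfun s) :=
  (summable_norm_Gterm s).of_norm.hasSum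

@[fun_prop]
lemma continuous_Gfun : Continuous Gfun := by
  refine continuous_iff_continuousAt.2 fun s => ?_
  have hR : ContinuousOn Gfun (Icc (-(|s| + 1)) (|s| + 1)) :=
    continuousOn_tsum (fun n => (continuous_pow n).div_const _ |>.continuousOn)
      (Real.summable_pow_div_factorial _) fun n w hw => norm_Gterm_le (abs_le.2 hw) n
  exact hR.continuousAt (Icc_mem_nhds (by linarith [neg_abs_le s]) (by linarith [le_abs_self s]))

lemma integral_pow_mul_sub_pow (n m : ℕ) (v : ℝ) :
    ∫ w in (0:ℝ)..v, w ^ n * (v - w) ^ m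
      = n.factorial * m.factorial / (n + m + 1).factorial * v ^ (n + m + 1) := by
  induction m generalizing n with
  | zero =>
    simp only [pow_zero, mul_one, add_zero, integral_pow, zero_pow n.succ_ne_zero, sub_zero,
      Nat.factorial_zero, Nat.cast_one, Nat.factorial_succ, Nat.cast_mul, Nat.cast_add]
    field_simp
  | succ m ih =>
    have hsplit : ∀ w : ℝ, w ^ n * (v - w) ^ (m + 1)
        = v * (w ^ n * (v - w) ^ m) - w ^ (n + 1) * (v - w) ^ m := fun w => by ring
    simp only [hsplit]
    rw [intervalIntegral.integral_sub (Continuous.intervalIntegrable (by fun_prop) _ _)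
      (Continuous.intervalIntegrable (by fun_prop) _ _), intervalIntegral.integral_const_mul,
      ih, ih, show n + 1 + m + 1 = n + (m + 1) + 1 by ring]
    push_cast [Nat.factorial_succ, show n + (m + 1) + 1 = (n + m + 1) + 1 by ring]
    field_simp
    ring

open Finset in
lemma sum_antidiagonal_neg_one_pow_div_factorial (N : ℕ) :
    ∑ p ∈ antidiagonal N, (-1 : ℝ) ^ p.2 / ((p.1 + 1).factorial * (p.2 + 1).factorial)
      = (1 + (-1) ^ N) / (N + 2).factorial := by
  have hchoose : ∀ p ∈ antidiagonal N,
      (-1 : ℝ) ^ p.2 / ((p.1 + 1).factorial * (p.2 + 1).factorial)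
        = (-1) ^ p.2 * (N + 2).choose (p.2 + 1) / (N + 2).factorial := by
    intro p hp
    rw [HasAntidiagonal.mem_antidiagonal] at hp
    have := Nat.add_choose_mul_factorial_mul_factorial (p.1 + 1) (p.2 + 1)
    rw [show p.1 + 1 + (p.2 + 1) = N + 2 by omega] at this
    have hpos : ((N + 2).choose (p.2 + 1) : ℝ) ≠ 0 := by
      exact_mod_cast (Nat.choose_pos (by omega)).ne'
    rw [← this]
    push_cast
    field_simp
  have halt : ∑ l ∈ range (N + 1), ((-1) ^ l * (N + 2).choose (l + 1) : ℤ) = 1 + (-1) ^ N := by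
    have := Int.alternating_sum_range_choose_eq_choose (n := N + 1) (m := N + 1)
    rw [sum_range_succ'] at this
    simp only [pow_succ, mul_neg, mul_one, neg_mul, sum_neg_distrib, pow_zero,
      Nat.choose_zero_right, Nat.cast_one, Nat.choose_self] at this
    linarith
  rw [sum_congr rfl hchoose, ← sum_div, Nat.antidiagonal_eq_map', sum_map]
  congr 1
  exact_mod_cast halt

lemma integral_Gterm_mul_Gterm_sub (k l : ℕ) (v : ℝ) :
    ∫ w in (0:ℝ)..v, Gterm k w * Gterm l (w - v)
      = (-1) ^ l * v ^ (k + l + 1)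
          / ((k + 1).factorial * (l + 1).factorial * (k + l + 1).factorial) := by
  have hterm : ∀ w : ℝ, Gterm k w * Gterm l (w - v)
      = (-1) ^ l / (k.factorial * (k + 1).factorial * l.factorial * (l + 1).factorial)
          * (w ^ k * (v - w) ^ l) := fun w => by
    rw [Gterm, Gterm, ← neg_sub v w, neg_pow]
    ring
  simp only [hterm]
  rw [intervalIntegral.integral_const_mul, integral_pow_mul_sub_pow]
  field_simp

open Finset in
lemma hasSum_sum_antidiagonal_Gterm_mul (s t : ℝ) :
    HasSum (fun N => ∑ p ∈ antidiagonal N, Gterm p.1 s * Gterm p.2 t) (Gfun s * Gfun t) := by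
  rw [← (hasSum_Gterm s).tsum_eq, ← (hasSum_Gterm t).tsum_eq,
    tsum_mul_tsum_eq_tsum_sum_antidiagonal_of_summable_norm (summable_norm_Gterm s)
      (summable_norm_Gterm t)]
  exact (summable_norm_sum_mul_antidiagonal_of_summable_norm (summable_norm_Gterm s)
    (summable_norm_Gterm t)).of_norm.hasSum

open Finset in
lemma integral_sum_antidiagonal_Gterm_mul_Gterm_sub (N : ℕ) (v : ℝ) :
    ∫ w in (0:ℝ)..v, ∑ p ∈ antidiagonal N, Gterm p.1 w * Gterm p.2 (w - v)
      = Gterm (N + 1) v - Gterm (N + 1) (-v) := by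
  have hfactor : ∀ p ∈ antidiagonal N, ∫ w in (0:ℝ)..v, Gterm p.1 w * Gterm p.2 (w - v)
      = v ^ (N + 1) / (N + 1).factorial
          * ((-1 : ℝ) ^ p.2 / ((p.1 + 1).factorial * (p.2 + 1).factorial)) := fun p hp => by
    rw [integral_Gterm_mul_Gterm_sub, HasAntidiagonal.mem_antidiagonal.1 hp]
    field_simp
  rw [intervalIntegral.integral_finsetSum
      fun p _ => Continuous.intervalIntegrable (by unfold Gterm; fun_prop) _ _,
    sum_congr rfl hfactor, ← mul_sum, sum_antidiagonal_neg_one_pow_div_factorial, Gterm, Gterm,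
    neg_pow v, pow_succ (-1 : ℝ)]
  field_simp
  ring

lemma hasSum_Gterm_succ_sub_Gterm_succ_neg (v : ℝ) :
    HasSum (fun N => Gterm (N + 1) v - Gterm (N + 1) (-v)) (Gfun v - Gfun (-v)) := by
  have := (hasSum_Gterm v).sub (hasSum_Gterm (-v))
  rw [← hasSum_nat_add_iff' 1] at this
  simpa [Gterm] using this

open Finset in
lemma integral_Gfun_mul_Gfun_sub (v : ℝ) :
    ∫ w in (0:ℝ)..v, Gfun w * Gfun (w - v) = Gfun v - Gfun (-v) := by
  let e (n : ℕ) : ℝ := |v| ^ n / n.factorial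
  have he : Summable e := Real.summable_pow_div_factorial _
  have hbound : ∀ N, ∀ w ∈ uIoc (0:ℝ) v,
      ‖∑ p ∈ antidiagonal N, Gterm p.1 w * Gterm p.2 (w - v)‖
        ≤ ∑ p ∈ antidiagonal N, e p.1 * e p.2 := by
    intro N w hw
    have hw0 : ‖w‖ ≤ |v| := by simpa using abs_sub_left_of_mem_uIcc (uIoc_subset_uIcc hw)
    have hwv : ‖w - v‖ ≤ |v| := by
      simpa [abs_sub_comm] using abs_sub_right_of_mem_uIcc (uIoc_subset_uIcc hw)
    refine (norm_sum_le _ _).trans (sum_le_sum fun p _ => ?_)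
    rw [norm_mul]
    exact mul_le_mul (norm_Gterm_le hw0 _) (norm_Gterm_le hwv _) (norm_nonneg _) (by positivity)
  have hint := hasSum_integral_of_dominated_convergence (μ := volume) (a := 0) (b := v)
    (fun N _ => ∑ p ∈ antidiagonal N, e p.1 * e p.2)
    (fun N => (by unfold Gterm; fun_prop : Continuous _).aestronglyMeasurable)
    (fun N => ae_of_all _ (hbound N))
    (ae_of_all _ fun _ _ => summable_sum_mul_antidiagonal_of_summable_mul <|
      he.mul_of_nonneg he (fun _ => by positivity) fun _ => by positivity)
    intervalIntegrable_const (ae_of_all _ fun w _ => hasSum_sum_antidiagonal_Gterm_mul w (w - v))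
  simp only [integral_sum_antidiagonal_Gterm_mul_Gterm_sub] at hint
  exact hint.unique (hasSum_Gterm_succ_sub_Gterm_succ_neg v)

def besselKernel (c x y : ℝ) : ℝ := 2 * c * y * Gfun (c * (x ^ 2 - y ^ 2))

lemma continuous_besselKernel (c : ℝ) : Continuous (Function.uncurry (besselKernel c)) := by
  unfold besselKernel; fun_prop

lemma Kker_eq_neg_besselKernel (ε lam x y : ℝ) :
    Kker ε lam x y = -besselKernel (lam / (4 * ε)) x y := by
  rw [Kker, besselKernel, show lam * (x ^ 2 - y ^ 2) / (4 * ε) = lam / (4 * ε) * (x ^ 2 - y ^ 2) by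
    ring]
  ring

lemma Lker_eq_besselKernel_neg (ε lam x y : ℝ) :
    Lker ε lam x y = besselKernel (-(lam / (4 * ε))) x y := by
  rw [Lker, besselKernel, show -(lam * (x ^ 2 - y ^ 2)) / (4 * ε)
    = -(lam / (4 * ε)) * (x ^ 2 - y ^ 2) by ring]
  ring

def volterra (k : ℝ → ℝ → ℝ) (f : ℝ → ℝ) (x : ℝ) : ℝ := ∫ y in (0:ℝ)..x, k x y * f y

def kernelComp (a b : ℝ → ℝ → ℝ) (x y : ℝ) : ℝ := ∫ s in y..x, a x s * b s y

lemma kernelComp_besselKernel_neg (c x y : ℝ) :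
    kernelComp (besselKernel (-c)) (besselKernel c) x y
      = -(besselKernel (-c) x y + besselKernel c x y) := by
  set v := c * (x ^ 2 - y ^ 2)
  let φ (s : ℝ) : ℝ := c * (s ^ 2 - y ^ 2)
  let g (w : ℝ) : ℝ := Gfun w * Gfun (w - v)
  have hφ : ∀ s ∈ uIcc y x, HasDerivAt φ (2 * c * s) s := fun s _ => by
    simpa [φ, mul_comm, mul_left_comm] using ((hasDerivAt_pow 2 s).sub_const (y ^ 2)).const_mul c
  have hsubst := integral_comp_mul_deriv hφ (by fun_prop) (by fun_prop : Continuous g)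
  have hintegrand : ∀ s, besselKernel (-c) x s * besselKernel c s y
      = -(2 * c * y) * ((g ∘ φ) s * (2 * c * s)) := fun s => by
    simp only [besselKernel, Function.comp, g, φ]
    rw [show -c * (x ^ 2 - s ^ 2) = c * (s ^ 2 - y ^ 2) - v by ring]
    ring
  rw [kernelComp, integral_congr fun s _ => hintegrand s, intervalIntegral.integral_const_mul,
    hsubst]
  simp only [φ, g, sub_self, mul_zero]
  rw [integral_Gfun_mul_Gfun_sub, besselKernel, besselKernel]
  simp only [v, neg_mul]
  ring

lemma integral_integral_triangle {a b : ℝ} (hab : a ≤ b) {F : ℝ → ℝ → ℝ}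
    (hF : Continuous (Function.uncurry F)) :
    ∫ s in a..b, ∫ t in a..s, F s t = ∫ t in a..b, ∫ s in t..b, F s t := by
  let G : ℝ → ℝ → ℝ := fun s t => if t ≤ s then F s t else 0
  have hG : Function.uncurry G = {p : ℝ × ℝ | p.2 ≤ p.1}.indicator (Function.uncurry F) := by
    ext ⟨s, t⟩; simp [G, Set.indicator_apply]
  have hGint : Integrable (Function.uncurry G)
      ((volume.restrict (Ioc a b)).prod (volume.restrict (Ioc a b))) := by
    rw [hG, Measure.prod_restrict, ← Measure.volume_eq_prod]
    refine Integrable.indicator ?_ (measurableSet_le measurable_snd measurable_fst)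
    exact (hF.continuousOn.integrableOn_compact (isCompact_Icc.prod isCompact_Icc)).mono_set
      (prod_mono Ioc_subset_Icc_self Ioc_subset_Icc_self)
  have hinner : ∀ s ∈ Ioc a b, ∫ t in a..s, F s t = ∫ t in Ioc a b, G s t := fun s hs => by
    have : G s = (Iic s).indicator (F s) := by ext t; simp [G, Set.indicator_apply]
    rw [this, setIntegral_indicator measurableSet_Iic, Ioc_inter_Iic, inf_eq_right.2 hs.2,
      integral_of_le hs.1.le]
  have houter : ∀ t ∈ Ioc a b, ∫ s in Ioc a b, G s t = ∫ s in t..b, F s t := fun t ht => by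
    have : (G · t) = (Ici t).indicator (F · t) := by ext s; simp [G, Set.indicator_apply]
    have hset : Ioc a b ∩ Ici t = Icc t b := by
      ext s; simp only [mem_inter_iff, mem_Ioc, mem_Ici, mem_Icc]
      exact ⟨fun h => ⟨h.2, h.1.2⟩, fun h => ⟨⟨ht.1.trans_le h.1, h.2⟩, h.1⟩⟩
    rw [this, setIntegral_indicator measurableSet_Ici, hset, integral_Icc_eq_integral_Ioc,
      integral_of_le ht.2]
  rw [integral_of_le hab, integral_of_le hab, setIntegral_congr_fun measurableSet_Ioc hinner,
    integral_integral_swap hGint, setIntegral_congr_fun measurableSet_Ioc houter]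

section Volterra

variable {a b k : ℝ → ℝ → ℝ} {f g : ℝ → ℝ} {x : ℝ}

lemma continuous_volterra (hk : Continuous (Function.uncurry k)) (hf : Continuous f) :
    Continuous (volterra k f) :=
  continuous_parametric_intervalIntegral_of_continuous (hk.mul (hf.comp continuous_snd))
    continuous_id

lemma volterra_add (hk : Continuous (Function.uncurry k)) (hf : Continuous f) (hg : Continuous g)
    (x : ℝ) : volterra k (f + g) x = volterra k f x + volterra k g x := by
  have hkx : Continuous (k x) := hk.comp (Continuous.prodMk_right x)
  simp only [volterra, Pi.add_apply, mul_add]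
  exact integral_add ((hkx.mul hf).intervalIntegrable _ _) ((hkx.mul hg).intervalIntegrable _ _)

lemma volterra_volterra (ha : Continuous (Function.uncurry a))
    (hb : Continuous (Function.uncurry b)) (hf : Continuous f) (hx : 0 ≤ x) :
    volterra a (volterra b f) x = volterra (kernelComp a b) f x := by
  have hF : Continuous (Function.uncurry fun s t => a x s * b s t * f t) :=
    ((ha.comp (Continuous.prodMk_right x |>.comp continuous_fst)).mul hb).mul
      (hf.comp continuous_snd)
  calc ∫ s in (0:ℝ)..x, a x s * ∫ t in (0:ℝ)..s, b s t * f t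
      = ∫ s in (0:ℝ)..x, ∫ t in (0:ℝ)..s, a x s * b s t * f t := by
        simp only [← intervalIntegral.integral_const_mul, mul_assoc]
    _ = ∫ t in (0:ℝ)..x, ∫ s in t..x, a x s * b s t * f t := integral_integral_triangle hx hF
    _ = ∫ t in (0:ℝ)..x, (∫ s in t..x, a x s * b s t) * f t := by
        simp only [intervalIntegral.integral_mul_const]

lemma add_volterra_eqOn {r : ℝ} (h : EqOn f g (Icc 0 r)) :
    EqOn (f + volterra k f) (g + volterra k g) (Icc 0 r) := by
  intro x hx
  have hsub : uIcc 0 x ⊆ Icc 0 r := by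
    rw [uIcc_of_le hx.1]; exact Icc_subset_Icc_right hx.2
  simp only [Pi.add_apply, volterra]
  rw [h hx, integral_congr fun y hy => congrArg (k x y * ·) (h (hsub hy))]

lemma add_volterra_add_volterra (ha : Continuous (Function.uncurry a))
    (hb : Continuous (Function.uncurry b)) (hab : ∀ x y, kernelComp a b x y = -(a x y + b x y))
    (hf : Continuous f) (hx : 0 ≤ x) :
    (f + volterra b f + volterra a (f + volterra b f)) x = f x := by
  have haf : IntervalIntegrable (fun y => a x y * f y) volume 0 x :=
    ((ha.comp (Continuous.prodMk_right x)).mul hf).intervalIntegrable _ _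
  have hbf : IntervalIntegrable (fun y => b x y * f y) volume 0 x :=
    ((hb.comp (Continuous.prodMk_right x)).mul hf).intervalIntegrable _ _
  have hcomp : volterra a (volterra b f) x = -(volterra a f x + volterra b f x) := by
    rw [volterra_volterra ha hb hf hx, volterra, volterra, volterra, ← integral_add haf hbf,
      ← intervalIntegral.integral_neg]
    simp only [hab, neg_mul, add_mul]
  rw [Pi.add_apply, Pi.add_apply, volterra_add ha hf (continuous_volterra hb hf), hcomp]
  ring

lemma add_volterra_add_volterra_of_continuousOn (ha : Continuous (Function.uncurry a))
    (hb : Continuous (Function.uncurry b)) (hab : ∀ x y, kernelComp a b x y = -(a x y + b x y))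
    {r : ℝ} (hf : ContinuousOn f (Icc 0 r)) (hx : x ∈ Icc 0 r) :
    (f + volterra b f + volterra a (f + volterra b f)) x = f x := by
  have hr : 0 ≤ r := hx.1.trans hx.2
  set f' := IccExtend hr ((Icc 0 r).domRestrict f)
  have hf' : Continuous f' :=
    continuous_IccExtend_iff.2 (continuousOn_iff_continuous_domRestrict.1 hf)
  have heq : EqOn f f' (Icc 0 r) := fun y hy =>
    (IccExtend_of_mem hr ((Icc 0 r).domRestrict f) hy).symm
  rw [add_volterra_eqOn (add_volterra_eqOn heq) hx, add_volterra_add_volterra ha hb hab hf' hx.1,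
    heq hx]

end Volterra

theorem backstepping_transformation_inverse_general (ε lam : ℝ)
    (T S : (ℝ → ℝ) → ℝ → ℝ)
    (hT : ∀ f x, T f x = f x - ∫ y in (0:ℝ)..x, Kker ε lam x y * f y)
    (hS : ∀ f x, S f x = f x + ∫ y in (0:ℝ)..x, Lker ε lam x y * f y) :
    ∀ f : ℝ → ℝ, ContinuousOn f (Set.Icc 0 1) →
      ∀ x ∈ Set.Icc (0:ℝ) 1, S (T f) x = f x ∧ T (S f) x = f x := by
  intro f hf x hx
  have hT' : ∀ g, T g = g + volterra (besselKernel (lam / (4 * ε))) g := fun g => by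
    ext y
    simp only [hT, Pi.add_apply, volterra, Kker_eq_neg_besselKernel, neg_mul,
      intervalIntegral.integral_neg, sub_neg_eq_add]
  have hS' : ∀ g, S g = g + volterra (besselKernel (-(lam / (4 * ε)))) g := fun g => by
    ext y
    simp only [hS, Pi.add_apply, volterra, Lker_eq_besselKernel_neg]
  have hTS := kernelComp_besselKernel_neg (-(lam / (4 * ε)))
  rw [neg_neg] at hTS
  simp only [hS', hT']
  exact ⟨add_volterra_add_volterra_of_continuousOn (continuous_besselKernel _)
      (continuous_besselKernel _) (kernelComp_besselKernel_neg _) hf hx,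
    add_volterra_add_volterra_of_continuousOn (continuous_besselKernel _)
      (continuous_besselKernel _) hTS hf hx⟩

/-- the backstepping transformation `(Tf)(x) = f(x) - ∫₀ˣ K(x,y)f(y)dy`
is invertible on `C⁰([0,1])` with inverse `(Sf)(x) = f(x) + ∫₀ˣ L(x,y)f(y)dy`. -/
theorem backstepping_transformation_inverse (ε lam : ℝ) (hε : 0 < ε) (hlam : 0 < lam)
    (T S : (ℝ → ℝ) → ℝ → ℝ)
    (hT : ∀ f x, T f x = f x - ∫ y in (0:ℝ)..x, Kker ε lam x y * f y)
    (hS : ∀ f x, S f x = f x + ∫ y in (0:ℝ)..x, Lker ε lam x y * f y) :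
    ∀ f : ℝ → ℝ, ContinuousOn f (Set.Icc 0 1) →
      ∀ x ∈ Set.Icc (0:ℝ) 1, S (T f) x = f x ∧ T (S f) x = f x :=
  backstepping_transformation_inverse_general ε lam T S hT hS

end
end
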